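/- arXiv:2509.18215 — 2 statements merged into one kernel-verified Lean document; each statement's English description precedes it below -/
import Mathlib

section
/- For an argument a with τ(a) = τ'(a) and unchanged outgoing attack and support edges between G and G', the reversal of G' to G with respect to any set S equals the reversal with respect to S \ {a}. -/
open scoped Classical

/-- A Quantitative Bipolar Argumentation Framework (QBAF). -/
structure QBAF (α : Type*) where
  args : Set α
  τ : α → ℝ
  att : Set (α × α)
  supp : Set (α × α)
  att_sub : att ⊆ args ×ˢ args
  supp_sub : supp ⊆ args ×ˢ args

namespace QBAF

variable {α : Type*}

/-- Equivalence of QBAFs: same arguments, same initial strengths on the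
arguments, same attacks and supports. -/
def Equiv (G H : QBAF α) : Prop :=
  G.args = H.args ∧ (∀ a ∈ G.args, G.τ a = H.τ a) ∧ G.att = H.att ∧ G.supp = H.supp

/-- The reversal of `G'` to `G` w.r.t. `S`. -/
noncomputable def reversal (G G' : QBAF α) (S : Set α) : QBAF α where
  args := (G'.args ∪ S) \ (S \ G.args)
  τ := fun a => if a ∈ G.args ∩ S then G.τ a else G'.τ a
  att := ((G'.att \ (S ×ˢ G.args)) ∪
      ((S ×ˢ ((G'.args ∪ S) \ (S \ G.args))) ∩ G.att)) ∩
      (((G'.args ∪ S) \ (S \ G.args)) ×ˢ ((G'.args ∪ S) \ (S \ G.args)))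
  supp := ((G'.supp \ (S ×ˢ G.args)) ∪
      ((S ×ˢ ((G'.args ∪ S) \ (S \ G.args))) ∩ G.supp)) ∩
      (((G'.args ∪ S) \ (S \ G.args)) ×ˢ ((G'.args ∪ S) \ (S \ G.args)))
  att_sub := Set.inter_subset_right
  supp_sub := Set.inter_subset_right

/-- Comparability of `x` and `y` in `G` w.r.t. semantics `σ`:
both final strengths are defined. -/
def comparable (σ : QBAF α → α → Option ℝ) (G : QBAF α) (x y : α) : Prop :=
  σ G x ≠ none ∧ σ G y ≠ none

/-- Strength consistency of `x` and `y` between `G` and `G'`. -/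
def scon (σ : QBAF α → α → Option ℝ) (G G' : QBAF α) (x y : α) : Prop :=
  (∀ a b a' b' : ℝ, σ G x = some a → σ G y = some b →
      σ G' x = some a' → σ G' y = some b' →
      (a > b → a' > b') ∧ (a < b → a' < b') ∧ (a = b → a' = b')) ∧
  (comparable σ G x y ↔ comparable σ G' x y)

/-- Sufficient strength inconsistency (SSI) explanation. -/
def SSI (σ : QBAF α → α → Option ℝ) (G G' : QBAF α) (x y : α) (S : Set α) : Prop :=
  S ⊆ G.args ∪ G'.args ∧
  ((S = ∅ ∧ scon σ G G' x y) ∨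
   (¬ scon σ G G' x y ∧
    ¬ scon σ G (reversal G G' ((G.args ∪ G'.args) \ S)) x y))

/-- ⊂-minimal SSI explanation. -/
def minSSI (σ : QBAF α → α → Option ℝ) (G G' : QBAF α) (x y : α) (S : Set α) : Prop :=
  SSI σ G G' x y S ∧ ∀ S' ⊂ S, ¬ SSI σ G G' x y S'

/-- Counterfactual strength inconsistency (CSI) explanation. -/
def CSI (σ : QBAF α → α → Option ℝ) (G G' : QBAF α) (x y : α) (C : Set α) : Prop :=
  SSI σ G G' x y C ∧ scon σ G (reversal G G' C) x y

/-- ⊂-minimal CSI explanation. -/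
def minCSI (σ : QBAF α → α → Option ℝ) (G G' : QBAF α) (x y : α) (C : Set α) : Prop :=
  CSI σ G G' x y C ∧ ∀ C' ⊂ C, ¬ CSI σ G G' x y C'

/-- (⊂-minimal) necessary strength inconsistency (NSI) explanation. -/
def NSI (σ : QBAF α → α → Option ℝ) (G G' : QBAF α) (x y : α) (N : Set α) : Prop :=
  (N = ∅ ∧ scon σ G G' x y) ∨
  (¬ scon σ G G' x y ∧ SSI σ G G' x y N ∧
   (∀ S ⊆ (G.args ∪ G'.args) \ N, ¬ SSI σ G G' x y S) ∧
   (∀ N' ⊂ N, ¬ (SSI σ G G' x y N' ∧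
      ∀ S ⊆ (G.args ∪ G'.args) \ N', ¬ SSI σ G G' x y S)))

/-- Reachability in the directed graph `(args, att ∪ supp)` of a QBAF. -/
def reach (G : QBAF α) (a b : α) : Prop :=
  Relation.TransGen (fun u v => (u, v) ∈ G.att ∪ G.supp) a b

/-- A QBAF is acyclic iff no argument is reachable from itself. -/
def Acyclic (G : QBAF α) : Prop := ∀ a, ¬ reach G a a

/-- Restriction of `G` to a set `A` of arguments. -/
def restrict (G : QBAF α) (A : Set α) : QBAF α where
  args := G.args ∩ A
  τ := G.τ
  att := G.att ∩ (A ×ˢ A)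
  supp := G.supp ∩ (A ×ˢ A)
  att_sub := by
    intro p hp
    exact ⟨⟨(G.att_sub hp.1).1, hp.2.1⟩, (G.att_sub hp.1).2, hp.2.2⟩
  supp_sub := by
    intro p hp
    exact ⟨⟨(G.supp_sub hp.1).1, hp.2.1⟩, (G.supp_sub hp.1).2, hp.2.2⟩

/-- `σ` is an aggregation-influence semantics with (parameterised) influence
function `f` and aggregation function `g`: on acyclic QBAFs, the final strength
of an argument is obtained by aggregating the final strengths of its attackers
and supporters and applying the influence of the aggregation. -/
def AggregationInfluence (σ : QBAF α → α → Option ℝ)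
    (f : ℝ → ℝ → ℝ) (g : Set ℝ → Set ℝ → ℝ) : Prop :=
  ∀ G : QBAF α, G.Acyclic → ∀ x ∈ G.args,
    σ G x = some (f (G.τ x)
      (g {s | ∃ y, (y, x) ∈ G.att ∧ σ G y = some s}
         {s | ∃ y, (y, x) ∈ G.supp ∧ σ G y = some s}))

/-- SSI explanation relativized to a class `𝒢` of QBAFs. -/
def SSIin (𝒢 : QBAF α → Prop) (σ : QBAF α → α → Option ℝ)
    (G G' : QBAF α) (x y : α) (S : Set α) : Prop :=
  S ⊆ G.args ∪ G'.args ∧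
  ((S = ∅ ∧ scon σ G G' x y) ∨
   (¬ scon σ G G' x y ∧
    ¬ scon σ G (reversal G G' ((G.args ∪ G'.args) \ S)) x y ∧
    𝒢 (reversal G G' ((G.args ∪ G'.args) \ S))))

/-- ⊂-minimal SSI explanation relativized to `𝒢`. -/
def minSSIin (𝒢 : QBAF α → Prop) (σ : QBAF α → α → Option ℝ)
    (G G' : QBAF α) (x y : α) (S : Set α) : Prop :=
  SSIin 𝒢 σ G G' x y S ∧ ∀ S' ⊂ S, ¬ SSIin 𝒢 σ G G' x y S'

/-- CSI explanation relativized to `𝒢`. -/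
def CSIin (𝒢 : QBAF α → Prop) (σ : QBAF α → α → Option ℝ)
    (G G' : QBAF α) (x y : α) (C : Set α) : Prop :=
  SSIin 𝒢 σ G G' x y C ∧ scon σ G (reversal G G' C) x y ∧ 𝒢 (reversal G G' C)

/-- ⊂-minimal CSI explanation relativized to `𝒢`. -/
def minCSIin (𝒢 : QBAF α → Prop) (σ : QBAF α → α → Option ℝ)
    (G G' : QBAF α) (x y : α) (C : Set α) : Prop :=
  CSIin 𝒢 σ G G' x y C ∧ ∀ C' ⊂ C, ¬ CSIin 𝒢 σ G G' x y C'

/-- (⊂-minimal) NSI explanation relativized to `𝒢`. -/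
def NSIin (𝒢 : QBAF α → Prop) (σ : QBAF α → α → Option ℝ)
    (G G' : QBAF α) (x y : α) (N : Set α) : Prop :=
  (N = ∅ ∧ scon σ G G' x y) ∨
  (¬ scon σ G G' x y ∧ SSIin 𝒢 σ G G' x y N ∧
   (∀ S ⊆ (G.args ∪ G'.args) \ N, ¬ SSIin 𝒢 σ G G' x y S) ∧
   (∀ N' ⊂ N, ¬ (SSIin 𝒢 σ G G' x y N' ∧
      ∀ S ⊆ (G.args ∪ G'.args) \ N', ¬ SSIin 𝒢 σ G G' x y S)))

end QBAF

/-!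
The sets `S` and `S \ {a}` differ at most in `a`, so the two reversals can only differ in
whether `a`'s own data (membership, initial strength, outgoing edges) is taken from `G` or
from `G'`. Since `a` is an argument of both and that data agrees, the choice is immaterial.
-/

attribute [ext] QBAF

namespace QBAF

variable {α : Type*}

theorem mem_iff_of_outgoing_eq {E E' : Set (α × α)} {A A' : Set α} {a : α}
    (hE : E ⊆ A ×ˢ A) (hE' : E' ⊆ A' ×ˢ A')
    (h : (({a} : Set α) ×ˢ A) ∩ E = (({a} : Set α) ×ˢ A') ∩ E') (v : α) :
    (a, v) ∈ E ↔ (a, v) ∈ E' := by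
  have hav := Set.ext_iff.1 h (a, v)
  simp only [Set.mem_inter_iff, Set.mem_prod, Set.mem_singleton_iff, true_and] at hav
  exact ⟨fun hv => (hav.1 ⟨(hE hv).2, hv⟩).2, fun hv => (hav.2 ⟨(hE' hv).2, hv⟩).2⟩

theorem reversal_args_diff_singleton (G G' : QBAF α) {a : α} (ha : a ∈ G.args ∩ G'.args)
    (S : Set α) : (reversal G G' S).args = (reversal G G' (S \ {a})).args := by
  ext b
  by_cases hb : b = a
  · subst hb
    simp [reversal, ha.1, ha.2]
  · simp [reversal, hb]

theorem reversal_τ_diff_singleton (G G' : QBAF α) {a : α} (ha : a ∈ G.args)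
    (hτ : G.τ a = G'.τ a) (S : Set α) :
    (reversal G G' S).τ = (reversal G G' (S \ {a})).τ := by
  funext b
  by_cases hb : b = a
  · subst hb
    by_cases hbS : b ∈ S <;> simp [reversal, ha, hbS, hτ]
  · simp [reversal, hb]

/-- The common shape of the attack and support relations of a reversal, with `A` its arguments. -/
theorem reversal_edges_diff_singleton {E E' : Set (α × α)} {B S A A' : Set α} {a : α}
    (hA : A = A') (hE : ∀ v, (a, v) ∈ E ↔ (a, v) ∈ E') :
    ((E' \ (S ×ˢ B)) ∪ ((S ×ˢ A) ∩ E)) ∩ (A ×ˢ A)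
      = ((E' \ ((S \ {a}) ×ˢ B)) ∪ (((S \ {a}) ×ˢ A') ∩ E)) ∩ (A' ×ˢ A') := by
  subst hA
  ext ⟨u, v⟩
  by_cases hu : u = a
  · subst hu
    by_cases huS : u ∈ S
    · simp only [Set.mem_inter_iff, Set.mem_union, Set.mem_sdiff, Set.mem_prod,
        Set.mem_singleton_iff, huS, hE v, true_and, not_true, and_false]
      tauto
    · rw [Set.sdiff_singleton_eq_self huS]
  · simp [hu]

end QBAF

/-- For an argument `a` with `τ(a) = τ'(a)` and unchanged
outgoing attack and support edges between `G` and `G'`, the reversal of `G'`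
to `G` with respect to any set `S` equals the reversal with respect to
`S \ {a}`. -/
theorem reversal_erase_unchanged {α : Type*} (G G' : QBAF α) (a : α)
    (ha : a ∈ G.args ∩ G'.args) (hτ : G.τ a = G'.τ a)
    (hatt : (({a} : Set α) ×ˢ G.args) ∩ G.att = (({a} : Set α) ×ˢ G'.args) ∩ G'.att)
    (hsupp : (({a} : Set α) ×ˢ G.args) ∩ G.supp = (({a} : Set α) ×ˢ G'.args) ∩ G'.supp) :
    ∀ S : Set α, QBAF.reversal G G' S = QBAF.reversal G G' (S \ {a}) := by
  intro S
  have hargs := QBAF.reversal_args_diff_singleton G G' ha S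
  ext1
  · exact hargs
  · exact QBAF.reversal_τ_diff_singleton G G' ha.1 hτ S
  · exact QBAF.reversal_edges_diff_singleton hargs
      (QBAF.mem_iff_of_outgoing_eq G.att_sub G'.att_sub hatt)
  · exact QBAF.reversal_edges_diff_singleton hargs
      (QBAF.mem_iff_of_outgoing_eq G.supp_sub G'.supp_sub hsupp)
end

section
/- Restricting attention to reversals into acyclic QBAFs preserves completeness: if G and G' are acyclic and x ≁ y between G and G', then for each of SSI, ⊂-minimal SSI, CSI, ⊂-minimal CSI, and ⊂-minimal NSI explanations relativized to the class of acyclic QBAFs, at least one explanation exists and the empty set is not an explanation. -/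
open scoped Classical

/-!
Reversing `G'` to `G` with respect to `∅` gives a QBAF equivalent to `G'`, and with respect to
all arguments one equivalent to `G`; both are acyclic, and `σ` does not distinguish equivalent
QBAFs. Hence the set of all arguments is an SSI and a CSI explanation (its complement `∅`
reverses to `G'`, which is inconsistent with `G`, while reversing everything yields `G`), and
`∅` is none, as its complement reverses to `G`. Minimal explanations exist because all
candidates are subsets of the finite set of arguments.
-/

theorem Set.Finite.exists_minimal_of_subset {α : Type*} {A : Set α} (hA : A.Finite)
    {Q : Set α → Prop} (hQ : ∀ S, Q S → S ⊆ A) {S₀ : Set α} (h₀ : Q S₀) :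
    ∃ S, Q S ∧ ∀ S' ⊂ S, ¬ Q S' := by
  obtain ⟨S, hS⟩ := (hA.finite_subsets.subset fun S hS => hQ S hS).exists_minimal ⟨S₀, h₀⟩
  exact ⟨S, hS.prop, fun S' hlt hS' => hS.not_lt hS' hlt⟩

namespace QBAF

variable {α : Type*}

theorem reversal_empty_equiv (G G' : QBAF α) : (reversal G G' ∅).Equiv G' :=
  ⟨by simp [reversal], by simp [reversal], by simpa [reversal] using G'.att_sub,
    by simpa [reversal] using G'.supp_sub⟩

theorem reversal_edges_eq_of_subset {A B : Set α} {E E' : Set (α × α)} (hBA : B ⊆ A)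
    (hE : E ⊆ B ×ˢ B) : ((E' \ (A ×ˢ B)) ∪ ((A ×ˢ B) ∩ E)) ∩ (B ×ˢ B) = E := by
  ext ⟨u, v⟩
  have huv := @hE (u, v)
  simp only [Set.mem_inter_iff, Set.mem_union, Set.mem_sdiff, Set.mem_prod] at huv ⊢
  constructor
  · rintro ⟨⟨-, hnot⟩ | ⟨-, he⟩, hu, hv⟩
    · exact absurd ⟨hBA hu, hv⟩ hnot
    · exact he
  · intro he
    obtain ⟨hu, hv⟩ := huv he
    exact ⟨Or.inr ⟨⟨hBA hu, hv⟩, he⟩, hu, hv⟩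

theorem reversal_args_union_args (G G' : QBAF α) :
    (reversal G G' (G.args ∪ G'.args)).args = G.args := by
  ext a
  simp only [reversal, Set.mem_sdiff, Set.mem_union]
  tauto

theorem reversal_args_union_equiv (G G' : QBAF α) :
    (reversal G G' (G.args ∪ G'.args)).Equiv G := by
  have hargs := reversal_args_union_args G G'
  refine ⟨hargs, fun a ha => ?_, ?_, ?_⟩
  · rw [hargs] at ha
    simp [reversal, ha]
  all_goals
    simp only [reversal] at hargs ⊢
    rw [hargs]
  · exact reversal_edges_eq_of_subset Set.subset_union_left G.att_sub
  · exact reversal_edges_eq_of_subset Set.subset_union_left G.supp_sub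

theorem Acyclic.of_equiv {H H' : QBAF α} (h : H'.Acyclic) (he : H.Equiv H') : H.Acyclic := by
  intro a ha
  rw [reach, he.2.2.1, he.2.2.2] at ha
  exact h a ha

-- `NSIin` (for `¬ scon`) holds exactly for the ⊂-minimal sets with this property.
def IsNecessaryIn (𝒢 : QBAF α → Prop) (σ : QBAF α → α → Option ℝ)
    (G G' : QBAF α) (x y : α) (N : Set α) : Prop :=
  SSIin 𝒢 σ G G' x y N ∧ ∀ S ⊆ (G.args ∪ G'.args) \ N, ¬ SSIin 𝒢 σ G G' x y S

section Explanations

variable {σ : QBAF α → α → Option ℝ} {G G' : QBAF α} {x y : α} {𝒢 : QBAF α → Prop}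

theorem scon_refl (σ : QBAF α → α → Option ℝ) (G : QBAF α) (x y : α) : scon σ G G x y := by
  refine ⟨fun a b a' b' ha hb ha' hb' => ?_, Iff.rfl⟩
  obtain rfl : a = a' := Option.some_injective _ (ha.symm.trans ha')
  obtain rfl : b = b' := Option.some_injective _ (hb.symm.trans hb')
  exact ⟨id, id, id⟩

theorem scon_congr_right {H H' : QBAF α} (h : σ H = σ H') :
    scon σ G H x y ↔ scon σ G H' x y := by
  simp only [scon, comparable, h]

variable (hσ : ∀ H H' : QBAF α, H.Equiv H' → σ H = σ H') (h : ¬ scon σ G G' x y)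
include hσ h

theorem ssiIn_args_union (h𝒢 : 𝒢 (reversal G G' ∅)) :
    SSIin 𝒢 σ G G' x y (G.args ∪ G'.args) := by
  refine ⟨subset_rfl, Or.inr ⟨h, ?_, ?_⟩⟩ <;> rw [Set.sdiff_self]
  · rwa [scon_congr_right (hσ _ _ (reversal_empty_equiv G G'))]
  · exact h𝒢

theorem not_ssiIn_empty : ¬ SSIin 𝒢 σ G G' x y ∅ := by
  rintro ⟨-, ⟨-, hcon⟩ | ⟨-, hincon, -⟩⟩
  · exact h hcon
  · rw [Set.sdiff_empty, scon_congr_right (hσ _ _ (reversal_args_union_equiv G G'))] at hincon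
    exact hincon (scon_refl σ G x y)

theorem csiIn_args_union (h𝒢 : 𝒢 (reversal G G' ∅))
    (h𝒢' : 𝒢 (reversal G G' (G.args ∪ G'.args))) : CSIin 𝒢 σ G G' x y (G.args ∪ G'.args) :=
  ⟨ssiIn_args_union hσ h h𝒢,
    (scon_congr_right (hσ _ _ (reversal_args_union_equiv G G'))).2 (scon_refl σ G x y), h𝒢'⟩

theorem isNecessaryIn_args_union (h𝒢 : 𝒢 (reversal G G' ∅)) :
    IsNecessaryIn 𝒢 σ G G' x y (G.args ∪ G'.args) := by
  refine ⟨ssiIn_args_union hσ h h𝒢, fun S hS => ?_⟩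
  rw [Set.sdiff_self, Set.subset_empty_iff] at hS
  exact hS ▸ not_ssiIn_empty hσ h

theorem exists_nsiIn (hfin : (G.args ∪ G'.args).Finite) (h𝒢 : 𝒢 (reversal G G' ∅)) :
    ∃ N, NSIin 𝒢 σ G G' x y N := by
  obtain ⟨N, ⟨hN, hNnec⟩, hNmin⟩ :=
    hfin.exists_minimal_of_subset (fun S hS => hS.1.1) (isNecessaryIn_args_union hσ h h𝒢)
  exact ⟨N, Or.inr ⟨h, hN, hNnec, hNmin⟩⟩

theorem not_nsiIn_empty : ¬ NSIin 𝒢 σ G G' x y ∅ := by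
  rintro (⟨-, hcon⟩ | ⟨-, hS, -⟩)
  · exact h hcon
  · exact not_ssiIn_empty hσ h hS

end Explanations

end QBAF

open QBAF in
theorem acyclic_explanation_completeness_general {α : Type*} (σ : QBAF α → α → Option ℝ)
    (hσ : ∀ H H' : QBAF α, QBAF.Equiv H H' → σ H = σ H')
    (G G' : QBAF α) (hG : G.Acyclic) (hG' : G'.Acyclic)
    (hfin : (G.args ∪ G'.args).Finite)
    (x y : α)
    (h : ¬ QBAF.scon σ G G' x y) :
    ((∃ S : Set α, QBAF.SSIin QBAF.Acyclic σ G G' x y S) ∧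
      ¬ QBAF.SSIin QBAF.Acyclic σ G G' x y ∅) ∧
    ((∃ S : Set α, QBAF.minSSIin QBAF.Acyclic σ G G' x y S) ∧
      ¬ QBAF.minSSIin QBAF.Acyclic σ G G' x y ∅) ∧
    ((∃ S : Set α, QBAF.CSIin QBAF.Acyclic σ G G' x y S) ∧
      ¬ QBAF.CSIin QBAF.Acyclic σ G G' x y ∅) ∧
    ((∃ S : Set α, QBAF.minCSIin QBAF.Acyclic σ G G' x y S) ∧
      ¬ QBAF.minCSIin QBAF.Acyclic σ G G' x y ∅) ∧
    ((∃ S : Set α, QBAF.NSIin QBAF.Acyclic σ G G' x y S) ∧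
      ¬ QBAF.NSIin QBAF.Acyclic σ G G' x y ∅) := by
  have hG'rev : (reversal G G' ∅).Acyclic := hG'.of_equiv (reversal_empty_equiv G G')
  have hGrev : (reversal G G' (G.args ∪ G'.args)).Acyclic :=
    hG.of_equiv (reversal_args_union_equiv G G')
  have hSSI := ssiIn_args_union hσ h hG'rev
  have hCSI := csiIn_args_union hσ h hG'rev hGrev
  have hSSI₀ : ¬ SSIin Acyclic σ G G' x y ∅ := not_ssiIn_empty hσ h
  have hCSI₀ : ¬ CSIin Acyclic σ G G' x y ∅ := fun hC => hSSI₀ hC.1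
  have hminSSI := hfin.exists_minimal_of_subset (fun S hS => hS.1) hSSI
  have hminCSI := hfin.exists_minimal_of_subset (fun S hS => hS.1.1) hCSI
  exact ⟨⟨⟨_, hSSI⟩, hSSI₀⟩, ⟨hminSSI, fun hS => hSSI₀ hS.1⟩, ⟨⟨_, hCSI⟩, hCSI₀⟩,
    ⟨hminCSI, fun hC => hCSI₀ hC.1⟩, ⟨exists_nsiIn hσ h hfin hG'rev, not_nsiIn_empty hσ h⟩⟩

/-- Restricting attention to reversals into acyclic QBAFs
preserves completeness: if `G` and `G'` are acyclic and `x ≁ y` between `G`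
and `G'`, then for each of SSI, ⊂-minimal SSI, CSI, ⊂-minimal CSI, and
⊂-minimal NSI explanations relativized to the class of acyclic QBAFs, at
least one explanation exists and `∅` is not an explanation. -/
theorem acyclic_explanation_completeness {α : Type*} (σ : QBAF α → α → Option ℝ)
    (hσ : ∀ H H' : QBAF α, QBAF.Equiv H H' → σ H = σ H')
    (G G' : QBAF α) (hG : G.Acyclic) (hG' : G'.Acyclic)
    (hfin : (G.args ∪ G'.args).Finite)
    (x y : α) (hx : x ∈ G.args ∩ G'.args) (hy : y ∈ G.args ∩ G'.args)
    (h : ¬ QBAF.scon σ G G' x y) :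
    ((∃ S : Set α, QBAF.SSIin QBAF.Acyclic σ G G' x y S) ∧
      ¬ QBAF.SSIin QBAF.Acyclic σ G G' x y ∅) ∧
    ((∃ S : Set α, QBAF.minSSIin QBAF.Acyclic σ G G' x y S) ∧
      ¬ QBAF.minSSIin QBAF.Acyclic σ G G' x y ∅) ∧
    ((∃ S : Set α, QBAF.CSIin QBAF.Acyclic σ G G' x y S) ∧
      ¬ QBAF.CSIin QBAF.Acyclic σ G G' x y ∅) ∧
    ((∃ S : Set α, QBAF.minCSIin QBAF.Acyclic σ G G' x y S) ∧
      ¬ QBAF.minCSIin QBAF.Acyclic σ G G' x y ∅) ∧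
    ((∃ S : Set α, QBAF.NSIin QBAF.Acyclic σ G G' x y S) ∧
      ¬ QBAF.NSIin QBAF.Acyclic σ G G' x y ∅) :=
  acyclic_explanation_completeness_general σ hσ G G' hG hG' hfin x y h
end
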